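/- Let F be a homogeneous form of degree deg F, let (I₁,I₂,τ) be an index tuple, and let r, q be coprime positive integers. Then for every positive integer m, S_{(I₁,I₂,τ)}(P; mr, mq) = m^{|I₃|−|τ|} · S_{(I₁,I₂,τ)}(P; r, q). -/

import Mathlib

open MeasureTheory Finset Asymptotics Filter
open scoped Classical

noncomputable section

/-- `e(x) = e^{2πix}`. -/
def eC (x : ℝ) : ℂ := Complex.exp (2 * Real.pi * Complex.I * x)

/-- Periodic Bernoulli polynomial `β_l(x) = B_l({x})`. -/
def pB (l : ℕ) (x : ℝ) : ℝ := Polynomial.aeval (Int.fract x) (Polynomial.bernoulli l)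

variable {s : ℕ}

/-- Evaluation of an integer polynomial at a real point. -/
def evalR (F : MvPolynomial (Fin s) ℤ) (x : Fin s → ℝ) : ℝ := MvPolynomial.aeval x F

/-- Partial derivative in direction `i` of a complex-valued function. -/
def pdC (i : Fin s) (f : (Fin s → ℝ) → ℂ) : (Fin s → ℝ) → ℂ :=
  fun x => deriv (fun t => f (Function.update x i t)) (x i)

/-- Mixed partial derivative `∂_x^τ`. -/
def mpdC (τ : Fin s → ℕ) (f : (Fin s → ℝ) → ℂ) : (Fin s → ℝ) → ℂ :=
  (List.finRange s).foldr (fun i g => (pdC i)^[τ i] g) f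

/-- Partial derivative in direction `i` of a real-valued function. -/
def pdR (i : Fin s) (f : (Fin s → ℝ) → ℝ) : (Fin s → ℝ) → ℝ :=
  fun x => deriv (fun t => f (Function.update x i t)) (x i)

/-- Mixed partial derivative `∂_x^τ` of a real-valued function. -/
def mpdR (τ : Fin s → ℕ) (f : (Fin s → ℝ) → ℝ) : (Fin s → ℝ) → ℝ :=
  (List.finRange s).foldr (fun i g => (pdR i)^[τ i] g) f

/-- The index set `I₃ = {1,…,s} ∖ (I₁ ∪ I₂)`. -/
def I3F (I₁ I₂ : Finset (Fin s)) : Finset (Fin s) := Finset.univ \ (I₁ ∪ I₂)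

/-- `σ_{a,b}`: fill the coordinates in `I₁` with `b`, those in `I₂` with `a`,
and those in `I₃` with the free variables `y`. -/
def fillS (I₁ I₂ : Finset (Fin s)) (a b : Fin s → ℝ)
    (y : {i : Fin s // i ∈ I3F I₁ I₂} → ℝ) : Fin s → ℝ :=
  fun i => if h : i ∈ I3F I₁ I₂ then y ⟨i, h⟩ else if i ∈ I₁ then b i else a i

/-- `J_{(I₁,I₂,τ)}(γ)`. -/
def JInt (F : MvPolynomial (Fin s) ℤ) (I₁ I₂ : Finset (Fin s)) (τ : Fin s → ℕ)
    (a b : Fin s → ℝ) (γ : ℝ) : ℂ :=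
  ∫ y : {i : Fin s // i ∈ I3F I₁ I₂} → ℝ in
      Set.univ.pi (fun i => Set.Icc (a i.1) (b i.1)),
    mpdC τ (fun x => eC (γ * evalR F x)) (fillS I₁ I₂ a b y)

/-- The generalized singular integral `𝒥_{(I₁,I₂,τ)}(m)`. -/
def calJ (F : MvPolynomial (Fin s) ℤ) (I₁ I₂ : Finset (Fin s)) (τ : Fin s → ℕ)
    (a b : Fin s → ℝ) (m : ℝ) : ℂ :=
  ∫ γ : ℝ, JInt F I₁ I₂ τ a b γ * eC (-(γ * m))

/-- The truncated singular integral `𝒥_{(I₁,I₂,τ)}(m; Q)`. -/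
def calJTrunc (F : MvPolynomial (Fin s) ℤ) (I₁ I₂ : Finset (Fin s)) (τ : Fin s → ℕ)
    (a b : Fin s → ℝ) (m Q : ℝ) : ℂ :=
  ∫ γ in Set.Icc (-Q) Q, JInt F I₁ I₂ τ a b γ * eC (-(γ * m))

/-- The exponential sum `S_{(I₁,I₂,τ)}(P; r, q)`. -/
def wSum (F : MvPolynomial (Fin s) ℤ) (I₁ I₂ : Finset (Fin s)) (τ : Fin s → ℕ)
    (a b : Fin s → ℝ) (P : ℝ) (r q : ℕ) : ℂ :=
  ∑ z : Fin s → Fin q,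
    eC ((r : ℝ) / (q : ℝ) * evalR F (fun i => ((z i : ℕ) : ℝ))) *
      ((((∏ i ∈ I₁, (-1 : ℝ) ^ (τ i + 1) / (Nat.factorial (τ i + 1) : ℝ) *
            pB (τ i + 1) ((P * b i - ((z i : ℕ) : ℝ)) / (q : ℝ))) *
        ∏ i ∈ I₂, (-1 : ℝ) ^ (τ i) / (Nat.factorial (τ i + 1) : ℝ) *
            pB (τ i + 1) ((P * a i - ((z i : ℕ) : ℝ)) / (q : ℝ))) : ℝ) : ℂ)

/-- The summand over `q` in the singular series. -/
def ssTerm (F : MvPolynomial (Fin s) ℤ) (I₁ I₂ : Finset (Fin s)) (τ : Fin s → ℕ)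
    (a b : Fin s → ℝ) (P : ℝ) (n : ℤ) (q : ℕ) : ℂ :=
  ∑ r ∈ (Finset.Icc 1 q).filter (fun r => Nat.Coprime r q),
    (q : ℂ) ^ (-(((I3F I₁ I₂).card : ℤ)) + ∑ i, (τ i : ℤ)) *
      wSum F I₁ I₂ τ a b P r q * eC (-((r : ℝ) / (q : ℝ) * (n : ℝ)))

/-- The generalized singular series `𝔖_{(I₁,I₂,τ)}(P,n)`. -/
def singSeries (F : MvPolynomial (Fin s) ℤ) (I₁ I₂ : Finset (Fin s)) (τ : Fin s → ℕ)
    (a b : Fin s → ℝ) (P : ℝ) (n : ℤ) : ℂ :=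
  ∑' q : ℕ, ssTerm F I₁ I₂ τ a b P n q

/-- Absolute convergence of the singular series. -/
def ssAbsConv (F : MvPolynomial (Fin s) ℤ) (I₁ I₂ : Finset (Fin s)) (τ : Fin s → ℕ)
    (a b : Fin s → ℝ) (P : ℝ) (n : ℤ) : Prop :=
  Summable (fun q : ℕ =>
    ∑ r ∈ (Finset.Icc 1 q).filter (fun r => Nat.Coprime r q),
      ‖(q : ℂ) ^ (-(((I3F I₁ I₂).card : ℤ)) + ∑ i, (τ i : ℤ)) *
        wSum F I₁ I₂ τ a b P r q * eC (-((r : ℝ) / (q : ℝ) * (n : ℝ)))‖)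

/-- The truncated singular series `𝔖_{(I₁,I₂,τ)}(P,n;Q)`. -/
def ssTrunc (F : MvPolynomial (Fin s) ℤ) (I₁ I₂ : Finset (Fin s)) (τ : Fin s → ℕ)
    (a b : Fin s → ℝ) (P : ℝ) (n : ℤ) (Q : ℝ) : ℂ :=
  ∑ q ∈ Finset.Icc 1 ⌊Q⌋₊, ssTerm F I₁ I₂ τ a b P n q

/-- Integer points of the dilated box `P·B`, `B = ∏ (aᵢ, bᵢ]`. -/
def boxPts (a b : Fin s → ℝ) (P : ℝ) : Finset (Fin s → ℤ) :=
  Fintype.piFinset (fun i => Finset.Icc (⌊P * a i⌋ + 1) ⌊P * b i⌋)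

/-- The exponential sum `S(α) = ∑_{x ∈ ℤ^s ∩ PB} e(αF(x))`. -/
def SBox (F : MvPolynomial (Fin s) ℤ) (a b : Fin s → ℝ) (P α : ℝ) : ℂ :=
  ∑ x ∈ boxPts a b P, eC (α * evalR F (fun i => ((x i : ℤ) : ℝ)))

/-- The counting function `R_B(P,n)`. -/
def RBox (F : MvPolynomial (Fin s) ℤ) (a b : Fin s → ℝ) (P : ℝ) (n : ℤ) : ℕ :=
  ((boxPts a b P).filter (fun x => MvPolynomial.eval x F = n)).card

/-- Membership in the index set `I(K)`. -/
def memIK (K : ℕ) (I₁ I₂ : Finset (Fin s)) (τ : Fin s → ℕ) : Prop :=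
  Disjoint I₁ I₂ ∧ (∀ i, i ∉ I₁ ∪ I₂ → τ i = 0) ∧ I₁.card + I₂.card + ∑ i, τ i < K

/-- The (Krull) dimension of the variety cut out by all partial derivatives of `G`. -/
def jacDim {ι : Type} (G : MvPolynomial ι ℂ) : WithBot ℕ∞ :=
  ringKrullDim (MvPolynomial ι ℂ ⧸
    Ideal.span (Set.range fun i : ι => MvPolynomial.pderiv i G))

/-- `dim V*`, the dimension of the affine singular locus of `F = 0`. -/
def singDim (F : MvPolynomial (Fin s) ℤ) : WithBot ℕ∞ :=
  jacDim (MvPolynomial.map (Int.castRingHom ℂ) F)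

/-- Substituting `x_i := b_i` for `i ∈ I₁` and `x_i := a_i` for `i ∈ I₂` into `F`,
viewed as a polynomial in the variables `x_{I₃}`. -/
def sigmaSubst (I₁ I₂ : Finset (Fin s)) (a b : Fin s → ℝ) (F : MvPolynomial (Fin s) ℤ) :
    MvPolynomial {i : Fin s // i ∈ I3F I₁ I₂} ℝ :=
  MvPolynomial.aeval
    (fun i : Fin s => if h : i ∈ I3F I₁ I₂ then MvPolynomial.X ⟨i, h⟩
      else if i ∈ I₁ then MvPolynomial.C (b i) else MvPolynomial.C (a i)) F

/-- `ρ_{(I₁,I₂)}`: the dimension of the singular locus of the degree-`d` part of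
`F(σ_{a,b}(x))` in affine `|I₃|`-space. -/
def rhoDim (I₁ I₂ : Finset (Fin s)) (a b : Fin s → ℝ) (d : ℕ)
    (F : MvPolynomial (Fin s) ℤ) : WithBot ℕ∞ :=
  jacDim (MvPolynomial.map (algebraMap ℝ ℂ)
    (MvPolynomial.homogeneousComponent d (sigmaSubst I₁ I₂ a b F)))

/-- The wide major arc `𝔐'_{r,q}(η)`. -/
def MArcW (d : ℕ) (P η : ℝ) (q r : ℕ) : Set ℝ :=
  {α : ℝ | α ∈ Set.Ico (0 : ℝ) 1 ∧ |(q : ℝ) * α - (r : ℝ)| ≤ (q : ℝ) * P ^ (η - (d : ℝ))}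

/-- The wide major arcs `𝔐'(η)`. -/
def MArcsW (d : ℕ) (P η : ℝ) : Set ℝ :=
  ⋃ q ∈ Finset.Icc 1 ⌊P ^ η⌋₊, ⋃ r ∈ (Finset.Icc 1 q).filter (fun r => Nat.Coprime r q),
    MArcW d P η q r

/-- The narrow major arc `𝔐_{r,q}(θ)`. -/
def MArcN (d : ℕ) (P θ : ℝ) (q r : ℕ) : Set ℝ :=
  {α : ℝ | α ∈ Set.Ico (0 : ℝ) 1 ∧ |(q : ℝ) * α - (r : ℝ)| ≤ P ^ (θ - (d : ℝ))}

/-- The narrow major arcs `𝔐(θ)`. -/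
def MArcsN (d : ℕ) (P θ : ℝ) : Set ℝ :=
  ⋃ q ∈ Finset.Icc 1 ⌊P ^ θ⌋₊, ⋃ r ∈ (Finset.Icc 1 q).filter (fun r => Nat.Coprime r q),
    MArcN d P θ q r

/-- The minor arcs `𝔪(θ) = [0,1) ∖ 𝔐(θ)`. -/
def minorArcs (d : ℕ) (P θ : ℝ) : Set ℝ := Set.Ico (0 : ℝ) 1 \ MArcsN d P θ

/-- Fill the coordinates in `I₃` with `y`, leaving the remaining ones free (`w`). -/
def fillW (I₁ I₂ : Finset (Fin s)) (w : Fin s → ℝ)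
    (y : {i : Fin s // i ∈ I3F I₁ I₂} → ℝ) : Fin s → ℝ :=
  fun i => if h : i ∈ I3F I₁ I₂ then y ⟨i, h⟩ else w i

/-- `J_{(I₁,I₂,τ)}(γ; x_{I₁}, x_{I₂})` with free variables on `I₁ ∪ I₂`. -/
def JFree (F : MvPolynomial (Fin s) ℤ) (I₁ I₂ : Finset (Fin s)) (τ : Fin s → ℕ)
    (a b : Fin s → ℝ) (γ : ℝ) (w : Fin s → ℝ) : ℂ :=
  ∫ y : {i : Fin s // i ∈ I3F I₁ I₂} → ℝ in
      Set.univ.pi (fun i => Set.Icc (a i.1) (b i.1)),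
    mpdC τ (fun x => eC (γ * evalR F x)) (fillW I₁ I₂ w y)

/-- `𝒥_{(I₁,I₂,τ)}(n; x_{I₁}, x_{I₂})` with free variables on `I₁ ∪ I₂`. -/
def calJFree (F : MvPolynomial (Fin s) ℤ) (I₁ I₂ : Finset (Fin s)) (τ : Fin s → ℕ)
    (a b : Fin s → ℝ) (n : ℝ) (w : Fin s → ℝ) : ℂ :=
  ∫ γ : ℝ, JFree F I₁ I₂ τ a b γ w * eC (-(γ * n))

/-- The bump function `e^{-(1-x²)^{-1}}` (unnormalised). -/
def omega0 (x : ℝ) : ℝ := if |x| < 1 then Real.exp (-(1 - x ^ 2)⁻¹) else 0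

/-- The normalising constant `c₀`. -/
def omegaC : ℝ := (∫ x : ℝ, omega0 x)⁻¹

/-- The kernel `ω`. -/
def omegaW (x : ℝ) : ℝ := omegaC * omega0 x

/-- The Fourier transform `ω̂(y) = ∫ ω(γ) e(γ y) dγ`. -/
def omegaHat (y : ℝ) : ℂ := ∫ γ : ℝ, (omegaW γ : ℂ) * eC (γ * y)

/-- The modified singular integral `𝒥^T_{(I₁,I₂,τ)}(n; x_{I₁}, x_{I₂})`. -/
def calJT (F : MvPolynomial (Fin s) ℤ) (I₁ I₂ : Finset (Fin s)) (τ : Fin s → ℕ)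
    (a b : Fin s → ℝ) (T n : ℝ) (w : Fin s → ℝ) : ℂ :=
  ∫ γ : ℝ, omegaHat (γ / T) * JFree F I₁ I₂ τ a b γ w * eC (-(γ * n))

/-- Distance to the nearest integer, `‖x‖`. -/
def nint (x : ℝ) : ℝ := |x - (round x : ℤ)|

/-- A pair `(α, q)` is primitive. -/
def IsPrimitivePair (α : ℝ) (q : ℕ) : Prop :=
  ∃ r : ℤ, IsCoprime r (q : ℤ) ∧ nint ((q : ℝ) * α) = |(q : ℝ) * α - (r : ℝ)|

/-- The weight class `𝒮(c, C, m)`. -/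
def inWeightClass (c C : ℝ) (m : ℕ) (ω : (Fin s → ℝ) → ℝ) : Prop :=
  ContDiff ℝ (⊤ : ℕ∞) ω ∧ (∀ x, 0 ≤ ω x) ∧
    Function.support ω ⊆ Set.univ.pi (fun _ : Fin s => Set.Icc (-c) c) ∧
    ∀ κ : Fin s → ℕ, (∑ i, κ i) ≤ m → ∀ x, |mpdR κ ω x| ≤ C

/-- The weighted exponential sum `S_ω(α, P)`. -/
def SW (F : MvPolynomial (Fin s) ℤ) (w : (Fin s → ℝ) → ℝ) (α P : ℝ) : ℂ :=
  ∑' x : Fin s → ℤ, ((w (fun i => ((x i : ℤ) : ℝ) / P) : ℝ) : ℂ) *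
    eC (α * evalR F (fun i => ((x i : ℤ) : ℝ)))

/-- Number of primitive integer points on `F = 0` of height at most `P`
(each rational point of the projective hypersurface is counted twice). -/
def NXcount (F : MvPolynomial (Fin s) ℤ) (P : ℝ) : ℕ :=
  Set.ncard {x : Fin s → ℤ | Finset.univ.gcd x = 1 ∧ MvPolynomial.eval x F = 0 ∧
    ∀ i, |((x i : ℤ) : ℝ)| ≤ P}

/-- The modified singular series `𝔖̃_{(I₁,I₂,τ)}(P)`. -/
def singSeriesMod (F : MvPolynomial (Fin s) ℤ) (I₁ I₂ : Finset (Fin s)) (τ : Fin s → ℕ)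
    (a b : Fin s → ℝ) (d : ℕ) (P : ℝ) : ℂ :=
  (1 / 2 : ℂ) * ∑' m : ℕ, if m = 0 then 0 else
    ((ArithmeticFunction.moebius m : ℤ) : ℂ) *
      (((m : ℝ) ^ (-((s : ℝ) - I₁.card - I₂.card - (∑ i, (τ i : ℝ)) - d)) : ℝ) : ℂ) *
      singSeries F I₁ I₂ τ a b (P / (m : ℝ)) 0

/-- `σ_{a,b}` for a labelling `c : Fin s → Fin 4` of `{1,…,s}` into the four classes
`I₁ (c = 0)`, `I₂ (c = 1)`, `I₃ (c = 2)`, `I₄ (c = 3)`. -/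
def fill4 (c : Fin s → Fin 4) (a b : Fin s → ℝ)
    (y : {i : Fin s // c i = 2 ∨ c i = 3} → ℝ) : Fin s → ℝ :=
  fun i => if h : c i = 2 ∨ c i = 3 then y ⟨i, h⟩ else if c i = 0 then b i else a i

/-- The counting function `r(t, Q!, n)` (statement 17). -/
def rcount (F : MvPolynomial (Fin s) ℤ) (i₀ : Fin s) (Q : ℕ) (n t : ℤ) : ℕ :=
  (Finset.univ.filter (fun z : Fin s → Fin (Nat.factorial Q) =>
    Int.ModEq (Nat.factorial Q : ℤ) ((z i₀ : ℕ) : ℤ) t ∧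
    Int.ModEq (Nat.factorial Q : ℤ) (MvPolynomial.eval (fun i => ((z i : ℕ) : ℤ)) F) n)).card

/-- The constant `ϱ_{(I₁,I₂,τ)}` (statement 16). -/
def rhoFactor (I₁ I₂ : Finset (Fin s)) (τ : Fin s → ℕ) : ℝ :=
  (-1 : ℝ) ^ I₂.card * ∏ i ∈ I₁ ∪ I₂, (-1 : ℝ) ^ (τ i + 1) / (Nat.factorial (τ i + 1) : ℝ)

end

section Aux
open Polynomial

noncomputable def phiP (m k : ℕ) : ℚ[X] := C ((m:ℚ)⁻¹) * (X + C (k:ℚ))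
noncomputable def GP (m l : ℕ) : ℚ[X] :=
  ∑ k ∈ Finset.range m, (Polynomial.bernoulli l).comp (phiP m k)

lemma bern_comp_X_add_one (n : ℕ) :
    (Polynomial.bernoulli n).comp (X + 1) = Polynomial.bernoulli n + (n : ℚ[X]) * X ^ (n - 1) := by
  apply Polynomial.funext
  intro x
  rw [eval_comp]
  simp [Polynomial.bernoulli_eval_one_add n x |>.symm, add_comm x 1]

lemma phiP_comp (m k : ℕ) : (phiP m k).comp (X + 1) = phiP m (k+1) := by
  simp only [phiP, mul_comp, C_comp, add_comp, X_comp]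
  push_cast
  rw [C_add, C_1]
  ring

lemma phiP_zero (m : ℕ) : phiP m 0 = C ((m:ℚ)⁻¹) * X := by
  simp [phiP]

lemma phiP_m (m : ℕ) (hm : (m:ℚ) ≠ 0) : phiP m m = C ((m:ℚ)⁻¹) * X + 1 := by
  simp only [phiP]
  rw [mul_add, ← C_mul, inv_mul_cancel₀ hm, C_1]

lemma GP_comp (m : ℕ) (hm : (m:ℚ) ≠ 0) (l : ℕ) :
    (GP m l).comp (X + 1) = GP m l + (l : ℚ[X]) * (C ((m:ℚ)⁻¹) * X) ^ (l - 1) := by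
  set f : ℕ → ℚ[X] := fun k => (Polynomial.bernoulli l).comp (phiP m k) with hf
  have hsum : (GP m l).comp (X + 1) = ∑ k ∈ Finset.range m, f (k+1) := by
    simp only [GP, Polynomial.sum_comp, Polynomial.comp_assoc, phiP_comp, hf]
  have htel : ∑ k ∈ Finset.range m, f (k+1) = (∑ k ∈ Finset.range m, f k) + f m - f 0 := by
    have h1 := Finset.sum_range_succ' f m
    have h2 := Finset.sum_range_succ f m
    rw [h2] at h1
    linear_combination -h1
  have hfm : f m = f 0 + (l : ℚ[X]) * (C ((m:ℚ)⁻¹) * X) ^ (l - 1) := by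
    have : f m = ((Polynomial.bernoulli l).comp (X + 1)).comp (C ((m:ℚ)⁻¹) * X) := by
      rw [Polynomial.comp_assoc, hf]
      simp [phiP_m m hm]
    rw [this, bern_comp_X_add_one, add_comp, mul_comp, pow_comp, X_comp, natCast_comp]
    simp [hf, phiP_zero]
  rw [hsum, htel, hfm, GP]
  ring

noncomputable def DP (m l : ℕ) : ℚ[X] :=
  C ((m:ℚ)^l) * GP m l - C (m:ℚ) * Polynomial.bernoulli l

lemma DP_comp (m : ℕ) (hm : (m:ℚ) ≠ 0) (l : ℕ) : (DP m l).comp (X + 1) = DP m l := by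
  simp only [DP, sub_comp, mul_comp, C_comp, GP_comp m hm l, bern_comp_X_add_one]
  rcases Nat.eq_zero_or_pos l with hl | hl
  · subst hl; simp
  · have key : C ((m:ℚ)^l) * ((C ((m:ℚ)⁻¹) * X) ^ (l-1)) = C (m:ℚ) * X ^ (l-1) := by
      rw [mul_pow, ← C_pow, ← mul_assoc, ← C_mul]
      congr 2
      rw [show l = (l-1) + 1 by omega]
      rw [pow_succ]
      field_simp
      rw [Nat.add_sub_cancel, one_div, inv_pow, mul_inv_cancel₀ (pow_ne_zero _ hm)]
    ring_nf
    ring_nf at key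
    linear_combination (l : ℚ[X]) * key

lemma shift_const {p : ℚ[X]} (h : p.comp (X + 1) = p) : ∃ c, p = C c := by
  have hval : ∀ n : ℕ, p.eval (n : ℚ) = p.eval 0 := by
    intro n
    induction n with
    | zero => norm_num
    | succ k ih =>
      have h2 := congrArg (Polynomial.eval (k : ℚ)) h
      rw [eval_comp] at h2
      simp only [eval_add, eval_X, eval_one] at h2
      push_cast
      rw [h2]
      exact ih
  refine ⟨p.eval 0, ?_⟩
  have hz : p - C (p.eval 0) = 0 := by
    apply Polynomial.eq_zero_of_infinite_isRoot
    apply Set.infinite_of_injective_forall_mem (f := (Nat.cast : ℕ → ℚ)) Nat.cast_injective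
    intro n
    simp [Polynomial.IsRoot, hval n]
  linear_combination hz

lemma phiP_deriv (m k : ℕ) : derivative (phiP m k) = C ((m:ℚ)⁻¹) := by
  simp [phiP]

lemma DP_deriv (m : ℕ) (hm : (m:ℚ) ≠ 0) (l : ℕ) :
    derivative (DP m (l+1)) = C ((l:ℚ)+1) * DP m l := by
  have hG : derivative (GP m (l+1)) = C ((m:ℚ)⁻¹ * ((l:ℚ)+1)) * GP m l := by
    simp only [GP, derivative_sum, Polynomial.derivative_comp, phiP_deriv,
      Polynomial.derivative_bernoulli (l+1), Nat.add_sub_cancel, mul_comp, natCast_comp,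
      Finset.mul_sum]
    apply Finset.sum_congr rfl
    intro k _
    rw [C_mul]
    simp only [C_add, C_1, Polynomial.C_eq_natCast]
    push_cast
    ring
  simp only [DP, derivative_sub, derivative_mul, derivative_C, zero_mul, zero_add, hG,
    Polynomial.derivative_bernoulli (l+1), Nat.add_sub_cancel]
  have hpow : C ((m:ℚ)^(l+1)) * C ((m:ℚ)⁻¹ * ((l:ℚ)+1)) = C ((l:ℚ)+1) * C ((m:ℚ)^l) := by
    rw [← C_mul, ← C_mul]
    congr 1
    rw [pow_succ]
    field_simp
  rw [← mul_assoc, hpow]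
  push_cast
  rw [show ((l:ℚ[X]) + 1) = C ((l:ℚ)+1) by rw [C_add, C_1, Polynomial.C_eq_natCast]]
  ring

lemma DP_eq_zero (m : ℕ) (hm : (m:ℚ) ≠ 0) (l : ℕ) : DP m l = 0 := by
  obtain ⟨c, hc⟩ := shift_const (DP_comp m hm l)
  obtain ⟨c', hc'⟩ := shift_const (DP_comp m hm (l+1))
  have hd := DP_deriv m hm l
  rw [hc', derivative_C, hc, ← C_mul] at hd
  have hc0 : ((l:ℚ)+1) * c = 0 := by
    have := congrArg (fun p => Polynomial.coeff p 0) hd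
    simpa using this.symm
  have hce : c = 0 := by
    have hl : ((l:ℚ)+1) ≠ 0 := by positivity
    exact (mul_eq_zero.mp hc0).resolve_left hl
  rw [hc, hce, C_0]

lemma bern_mult_poly (m : ℕ) (hm : (m:ℚ) ≠ 0) (l : ℕ) :
    C ((m:ℚ)^l) * GP m l = C (m:ℚ) * Polynomial.bernoulli l := by
  have h := DP_eq_zero m hm l
  rw [DP] at h
  linear_combination h


lemma bern_mult_real (m l : ℕ) (hm : m ≠ 0) (x : ℝ) :
    ∑ k ∈ Finset.range m, (Polynomial.aeval ((x + k)/m) (Polynomial.bernoulli l) : ℝ)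
      = (m:ℝ) * ((m:ℝ)^l)⁻¹ * Polynomial.aeval x (Polynomial.bernoulli l) := by
  have hmQ : (m:ℚ) ≠ 0 := by exact_mod_cast hm
  have hmR : (m:ℝ) ≠ 0 := by exact_mod_cast hm
  have h := congrArg (fun p => (Polynomial.aeval x p : ℝ)) (bern_mult_poly m hmQ l)
  simp only [map_mul, Polynomial.aeval_C, GP, map_sum, Polynomial.aeval_comp, eq_ratCast] at h
  push_cast at h
  have hφ : ∀ k : ℕ, (Polynomial.aeval x (phiP m k) : ℝ) = (x + k)/m := by
    intro k
    simp only [phiP, map_mul, map_add, Polynomial.aeval_C, Polynomial.aeval_X]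
    push_cast
    ring
  simp only [hφ] at h
  have h2 : ((m:ℝ)^l) * ∑ k ∈ Finset.range m,
      (Polynomial.aeval ((x + k)/m) (Polynomial.bernoulli l) : ℝ)
      = (m:ℝ) * Polynomial.aeval x (Polynomial.bernoulli l) := by
    rw [← h]
  field_simp at h2 ⊢
  linarith [h2]

lemma pB_add_int (l : ℕ) (x : ℝ) (k : ℤ) : pB l (x + k) = pB l x := by
  unfold pB
  rw [Int.fract_add_intCast]

lemma sum_shift_periodic (g : ℤ → ℝ) (m : ℕ) (hg : ∀ t : ℤ, g (t + m) = g t) (n : ℤ) :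
    ∑ k ∈ Finset.range m, g (n + k) = ∑ k ∈ Finset.range m, g k := by
  have step : ∀ n : ℤ, ∑ k ∈ Finset.range m, g ((n+1) + k) = ∑ k ∈ Finset.range m, g (n + k) := by
    intro n
    have h1 := Finset.sum_range_succ' (fun k : ℕ => g (n + k)) m
    have h2 := Finset.sum_range_succ (fun k : ℕ => g (n + k)) m
    have e1 : ∀ k : ℕ, g ((n+1) + k) = g (n + (k+1)) := by
      intro k; congr 1; push_cast; ring
    have e2 : g (n + m) = g (n + 0) := by
      rw [add_zero]; exact hg n
    simp only [e1]
    rw [h2] at h1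
    push_cast at h1 ⊢
    linarith [h1, e2]
  induction n using Int.induction_on with
  | zero => simp
  | succ n ih => rw [step n]; exact ih
  | pred n ih => rw [← step (-n - 1)]; convert ih using 2 <;> ring_nf

lemma pB_mul (l m : ℕ) (hm : m ≠ 0) (x : ℝ) :
    ∑ k ∈ Finset.range m, pB l ((x + k)/m)
      = (m:ℝ) * ((m:ℝ)^l)⁻¹ * pB l x := by
  have hmR : (0:ℝ) < m := by positivity
  set f : ℝ := Int.fract x with hf
  set n : ℤ := ⌊x⌋ with hn
  have hf0 : 0 ≤ f := Int.fract_nonneg x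
  have hf1 : f < 1 := Int.fract_lt_one x
  have hx : x = f + n := by rw [hf, hn, Int.fract]; ring
  set g : ℤ → ℝ := fun t => pB l ((f + t)/m) with hg
  have hper : ∀ t : ℤ, g (t + m) = g t := by
    intro t
    simp only [hg]
    push_cast
    rw [show (f + ((t:ℝ) + m))/(m:ℝ) = (f + t)/m + ((1:ℤ):ℝ) by push_cast; field_simp; ring,
      pB_add_int]
  have h1 : ∑ k ∈ Finset.range m, pB l ((x + k)/m) = ∑ k ∈ Finset.range m, g (n + k) := by
    apply Finset.sum_congr rfl
    intro k _
    simp only [hg]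
    congr 2
    rw [hx]
    push_cast
    ring
  have h2 : ∀ k ∈ Finset.range m, g (k : ℤ)
      = Polynomial.aeval ((f + k)/m) (Polynomial.bernoulli l) := by
    intro k hk
    have hkm : (k:ℝ) + 1 ≤ m := by exact_mod_cast Nat.succ_le_of_lt (Finset.mem_range.mp hk)
    simp only [hg, pB]
    congr 1
    push_cast
    rw [Int.fract_eq_self.mpr]
    refine ⟨div_nonneg (by positivity) hmR.le, ?_⟩
    rw [div_lt_one hmR]
    linarith
  have h3 : pB l x = Polynomial.aeval f (Polynomial.bernoulli l) := by
    simp only [pB, hf]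
  rw [h1, sum_shift_periodic g m hper n, Finset.sum_congr rfl h2,
    bern_mult_real m l hm f, h3]

lemma pB_mul_sub (l m : ℕ) (hm : 1 ≤ m) (x : ℝ) :
    ∑ t ∈ Finset.range m, pB l ((x - t)/m)
      = (m:ℝ) * ((m:ℝ)^l)⁻¹ * pB l x := by
  have h0 := Finset.sum_range_reflect (fun t : ℕ => pB l ((x - t)/m)) m
  rw [← h0]
  have h1 : ∀ t ∈ Finset.range m, pB l ((x - (m - 1 - t : ℕ))/m)
      = pB l (((x - (m-1:ℝ)) + t)/m) := by
    intro t ht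
    congr 2
    have htm : t + 1 ≤ m := Nat.succ_le_of_lt (Finset.mem_range.mp ht)
    have : ((m - 1 - t : ℕ) : ℝ) = (m:ℝ) - 1 - t := by
      push_cast [Nat.cast_sub (by omega : t ≤ m - 1), Nat.cast_sub hm]
      ring
    rw [this]
    ring
  rw [Finset.sum_congr rfl h1, pB_mul l m (by omega) (x - ((m:ℝ)-1))]
  congr 1
  rw [show x - ((m:ℝ)-1) = x + ((1 - m : ℤ):ℝ) by push_cast; ring, pB_add_int]

lemma eC_add_int (x : ℝ) (k : ℤ) : eC (x + k) = eC x := by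
  unfold eC
  push_cast
  rw [mul_add, Complex.exp_add]
  have : Complex.exp (2 * (Real.pi:ℂ) * Complex.I * (k:ℂ)) = 1 := by
    rw [show 2 * (Real.pi:ℂ) * Complex.I * (k:ℂ) = (k:ℂ) * (2 * Real.pi * Complex.I) by ring]
    exact Complex.exp_int_mul_two_pi_mul_I k
  rw [this, mul_one]

lemma evalR_int (F : MvPolynomial (Fin s) ℤ) (g : Fin s → ℤ) :
    evalR F (fun i => (g i : ℝ)) = ((MvPolynomial.eval g F : ℤ) : ℝ) := by
  unfold evalR
  rw [MvPolynomial.aeval_def]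
  have h := MvPolynomial.eval₂_comp_left (Int.castRingHom ℝ) (RingHom.id ℤ) g F
  rw [MvPolynomial.eval₂_id] at h
  rw [show ((MvPolynomial.eval g F : ℤ) : ℝ) = (Int.castRingHom ℝ) (MvPolynomial.eval g F) from rfl, h]
  rw [RingHom.comp_id]
  rfl

lemma eval_mod (q : ℕ) (F : MvPolynomial (Fin s) ℤ) (g₁ g₂ : Fin s → ℤ)
    (h : ∀ i, ((g₁ i : ZMod q)) = (g₂ i : ZMod q)) :
    ((MvPolynomial.eval g₁ F : ℤ) : ZMod q) = ((MvPolynomial.eval g₂ F : ℤ) : ZMod q) := by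
  have h1 := MvPolynomial.eval₂_comp_left (Int.castRingHom (ZMod q)) (RingHom.id ℤ) g₁ F
  have h2 := MvPolynomial.eval₂_comp_left (Int.castRingHom (ZMod q)) (RingHom.id ℤ) g₂ F
  rw [MvPolynomial.eval₂_id] at h1 h2
  have : ((Int.castRingHom (ZMod q)) ∘ g₁) = ((Int.castRingHom (ZMod q)) ∘ g₂) := by
    funext i; exact h i
  rw [show ((MvPolynomial.eval g₁ F : ℤ) : ZMod q) = Int.castRingHom (ZMod q) (MvPolynomial.eval g₁ F) from rfl,
    show ((MvPolynomial.eval g₂ F : ℤ) : ZMod q) = Int.castRingHom (ZMod q) (MvPolynomial.eval g₂ F) from rfl,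
    h1, h2, this]

lemma eC_frac (r q : ℕ) (hq : q ≠ 0) (N₁ N₂ : ℤ) (h : (q:ℤ) ∣ N₁ - N₂) :
    eC ((r:ℝ)/q * N₁) = eC ((r:ℝ)/q * N₂) := by
  obtain ⟨K, hK⟩ := h
  have hqR : (q:ℝ) ≠ 0 := by exact_mod_cast hq
  have hN : (N₁:ℝ) = N₂ + q * K := by
    have : (N₁:ℝ) - N₂ = q * K := by exact_mod_cast congrArg (Int.cast : ℤ → ℝ) hK
    linarith
  rw [hN, show (r:ℝ)/q * ((N₂:ℝ) + q*K) = (r:ℝ)/q * N₂ + ((r*K : ℤ):ℝ) by push_cast; field_simp]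
  exact eC_add_int _ _

end Aux

/-- Multiplication property of the generalized exponential sums (Lemma 10.1):
`S_{(I₁,I₂,τ)}(P; mr, mq) = m^{|I₃| - |τ|} S_{(I₁,I₂,τ)}(P; r, q)`. -/
theorem statement_15 (s : ℕ) (F : MvPolynomial (Fin s) ℤ)
    (hF : F.IsHomogeneous F.totalDegree)
    (a b : Fin s → ℝ) (hab : ∀ i, a i < b i)
    (I₁ I₂ : Finset (Fin s)) (τ : Fin s → ℕ) (hdisj : Disjoint I₁ I₂)
    (hτ : ∀ i, i ∉ I₁ ∪ I₂ → τ i = 0)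
    (P : ℝ) (r q m : ℕ) (hr : 1 ≤ r) (hq : 1 ≤ q) (hco : Nat.Coprime r q) (hm : 1 ≤ m) :
    wSum F I₁ I₂ τ a b P (m * r) (m * q) =
      (m : ℂ) ^ (((I3F I₁ I₂).card : ℤ) - ∑ i, (τ i : ℤ)) * wSum F I₁ I₂ τ a b P r q := by
  classical
  have hm0 : m ≠ 0 := by omega
  have hq0 : q ≠ 0 := by omega
  have hmR : (m:ℝ) ≠ 0 := Nat.cast_ne_zero.mpr hm0
  have hqR : (q:ℝ) ≠ 0 := Nat.cast_ne_zero.mpr hq0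
  have hmC : (m:ℂ) ≠ 0 := Nat.cast_ne_zero.mpr hm0
  set M : ℝ := (m:ℝ)^((I3F I₁ I₂).card) * ((m:ℝ)^(∑ i, τ i))⁻¹ with hM
  have hMC : ((M:ℝ):ℂ) = (m : ℂ) ^ (((I3F I₁ I₂).card : ℤ) - ∑ i, (τ i : ℤ)) := by
    have hsum : (∑ i, (τ i : ℤ)) = ((∑ i, τ i : ℕ) : ℤ) := by push_cast; rfl
    rw [hsum, zpow_sub₀ hmC, zpow_natCast, zpow_natCast, hM]
    push_cast
    try rw [div_eq_mul_inv]
  set E : ((Fin s → Fin m) × (Fin s → Fin q)) ≃ (Fin s → Fin (m * q)) :=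
    (Equiv.arrowProdEquivProdArrow (Fin s) (fun _ => Fin m) (fun _ => Fin q)).symm.trans
      (Equiv.piCongrRight fun _ => finProdFinEquiv) with hE
  have hEval : ∀ (t : Fin s → Fin m) (u : Fin s → Fin q) (i : Fin s),
      ((E (t, u) i : Fin (m*q)) : ℕ) = (u i : ℕ) + q * (t i : ℕ) := by
    intro t u i
    simp [hE, Equiv.arrowProdEquivProdArrow, finProdFinEquiv_apply_val]
  have hdiv : ((m*r : ℕ):ℝ)/((m*q : ℕ):ℝ) = (r:ℝ)/(q:ℝ) := by
    push_cast
    rw [mul_div_mul_left _ _ hmR]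
  have heC : ∀ (t : Fin s → Fin m) (u : Fin s → Fin q),
      eC ((r:ℝ)/(q:ℝ) * evalR F (fun i => (((u i : ℕ) + q * (t i : ℕ) : ℕ) : ℝ)))
      = eC ((r:ℝ)/(q:ℝ) * evalR F (fun i => ((u i : ℕ) : ℝ))) := by
    intro t u
    have e1 : evalR F (fun i => (((u i : ℕ) + q * (t i : ℕ) : ℕ) : ℝ))
        = ((MvPolynomial.eval (fun i => ((u i : ℕ) : ℤ) + q * ((t i : ℕ) : ℤ)) F : ℤ) : ℝ) := by
      rw [← evalR_int]
      try congr 1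
      all_goals (funext i; push_cast; try ring)
    have e2 : evalR F (fun i => ((u i : ℕ) : ℝ))
        = ((MvPolynomial.eval (fun i => ((u i : ℕ) : ℤ)) F : ℤ) : ℝ) := by
      rw [← evalR_int]
      try congr 1
      all_goals (funext i; push_cast; try ring)
    rw [e1, e2]
    apply eC_frac r q hq0
    have hmod := eval_mod q F (fun i => ((u i : ℕ) : ℤ) + q * ((t i : ℕ) : ℤ))
      (fun i => ((u i : ℕ) : ℤ)) ?_
    · rw [← ZMod.intCast_zmod_eq_zero_iff_dvd]
      push_cast at hmod ⊢
      rw [hmod, sub_self]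
    · intro i
      push_cast
      rw [ZMod.natCast_self]
      ring
  have hws : ∀ u : Fin s → Fin q,
      ∑ t : Fin s → Fin m,
        ((∏ i ∈ I₁, (-1 : ℝ) ^ (τ i + 1) / (Nat.factorial (τ i + 1) : ℝ) *
              pB (τ i + 1) ((P * b i - (((u i : ℕ) + q * (t i : ℕ) : ℕ) : ℝ)) / ((m*q : ℕ) : ℝ))) *
          ∏ i ∈ I₂, (-1 : ℝ) ^ (τ i) / (Nat.factorial (τ i + 1) : ℝ) *
              pB (τ i + 1) ((P * a i - (((u i : ℕ) + q * (t i : ℕ) : ℕ) : ℝ)) / ((m*q : ℕ) : ℝ)))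
      = M * ((∏ i ∈ I₁, (-1 : ℝ) ^ (τ i + 1) / (Nat.factorial (τ i + 1) : ℝ) *
              pB (τ i + 1) ((P * b i - ((u i : ℕ) : ℝ)) / (q : ℝ))) *
          ∏ i ∈ I₂, (-1 : ℝ) ^ (τ i) / (Nat.factorial (τ i + 1) : ℝ) *
              pB (τ i + 1) ((P * a i - ((u i : ℕ) : ℝ)) / (q : ℝ))) := by
    intro u
    set h : Fin s → Fin m → ℝ := fun i tt =>
      if i ∈ I₁ then (-1 : ℝ) ^ (τ i + 1) / (Nat.factorial (τ i + 1) : ℝ) *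
          pB (τ i + 1) ((P * b i - (((u i : ℕ) + q * (tt : ℕ) : ℕ) : ℝ)) / ((m*q : ℕ) : ℝ))
      else if i ∈ I₂ then (-1 : ℝ) ^ (τ i) / (Nat.factorial (τ i + 1) : ℝ) *
          pB (τ i + 1) ((P * a i - (((u i : ℕ) + q * (tt : ℕ) : ℕ) : ℝ)) / ((m*q : ℕ) : ℝ))
      else 1 with hh
    have hsplit : ∀ t : Fin s → Fin m,
        ((∏ i ∈ I₁, (-1 : ℝ) ^ (τ i + 1) / (Nat.factorial (τ i + 1) : ℝ) *
              pB (τ i + 1) ((P * b i - (((u i : ℕ) + q * (t i : ℕ) : ℕ) : ℝ)) / ((m*q : ℕ) : ℝ))) *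
          ∏ i ∈ I₂, (-1 : ℝ) ^ (τ i) / (Nat.factorial (τ i + 1) : ℝ) *
              pB (τ i + 1) ((P * a i - (((u i : ℕ) + q * (t i : ℕ) : ℕ) : ℝ)) / ((m*q : ℕ) : ℝ)))
        = ∏ i, h i (t i) := by
      intro t
      rw [← Finset.prod_mul_prod_compl (I₁ ∪ I₂) (fun i => h i (t i))]
      have hc : ∏ i ∈ (I₁ ∪ I₂)ᶜ, h i (t i) = 1 := by
        apply Finset.prod_eq_one
        intro i hi
        rw [Finset.mem_compl, Finset.mem_union] at hi
        push_neg at hi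
        simp [hh, hi.1, hi.2]
      rw [hc, mul_one, Finset.prod_union hdisj]
      congr 1
      · exact Finset.prod_congr rfl (fun i hi => by simp [hh, hi])
      · refine Finset.prod_congr rfl (fun i hi => ?_)
        have hi1 : i ∉ I₁ := Finset.disjoint_right.mp hdisj hi
        simp [hh, hi, hi1]
    simp only [hsplit]
    rw [← Fintype.piFinset_univ, ← Finset.prod_univ_sum]
    rw [← Finset.prod_mul_prod_compl (I₁ ∪ I₂) (fun i => ∑ tt : Fin m, h i tt)]
    have hI3 : ∏ i ∈ (I₁ ∪ I₂)ᶜ, (∑ tt : Fin m, h i tt) = (m:ℝ)^((I3F I₁ I₂).card) := by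
      have hval : ∀ i ∈ (I₁ ∪ I₂)ᶜ, (∑ tt : Fin m, h i tt) = (m:ℝ) := by
        intro i hi
        rw [Finset.mem_compl, Finset.mem_union] at hi
        push_neg at hi
        simp [hh, hi.1, hi.2]
      rw [Finset.prod_congr rfl hval, Finset.prod_const]
      congr 1
      try simp only [I3F, Finset.compl_eq_univ_sdiff]
    have hI1 : ∀ i ∈ I₁, (∑ tt : Fin m, h i tt)
        = ((m:ℝ)^(τ i))⁻¹ * ((-1 : ℝ) ^ (τ i + 1) / (Nat.factorial (τ i + 1) : ℝ) *
            pB (τ i + 1) ((P * b i - ((u i : ℕ) : ℝ)) / (q : ℝ))) := by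
      intro i hi
      have hsum : ∑ tt : Fin m, pB (τ i + 1) ((P * b i - (((u i : ℕ) + q * (tt : ℕ) : ℕ) : ℝ)) / ((m*q : ℕ) : ℝ))
          = (m:ℝ) * ((m:ℝ)^(τ i + 1))⁻¹ * pB (τ i + 1) ((P * b i - ((u i : ℕ) : ℝ)) / (q : ℝ)) := by
        rw [Fin.sum_univ_eq_sum_range
          (fun k : ℕ => pB (τ i + 1) ((P * b i - (((u i : ℕ) + q * k : ℕ) : ℝ)) / ((m*q : ℕ) : ℝ)))]
        rw [Finset.sum_congr rfl (fun k _ => ?_), pB_mul_sub (τ i + 1) m hm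
          ((P * b i - ((u i : ℕ) : ℝ)) / (q : ℝ))]
        congr 1
        push_cast
        field_simp
        ring
      simp only [hh, if_pos hi]
      rw [← Finset.mul_sum, hsum]
      have hmm : (m:ℝ) * ((m:ℝ)^(τ i + 1))⁻¹ = ((m:ℝ)^(τ i))⁻¹ := by
        rw [pow_succ]
        field_simp
        try ring
      rw [hmm]
      ring
    have hI2 : ∀ i ∈ I₂, (∑ tt : Fin m, h i tt)
        = ((m:ℝ)^(τ i))⁻¹ * ((-1 : ℝ) ^ (τ i) / (Nat.factorial (τ i + 1) : ℝ) *
            pB (τ i + 1) ((P * a i - ((u i : ℕ) : ℝ)) / (q : ℝ))) := by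
      intro i hi
      have hi1 : i ∉ I₁ := Finset.disjoint_right.mp hdisj hi
      have hsum : ∑ tt : Fin m, pB (τ i + 1) ((P * a i - (((u i : ℕ) + q * (tt : ℕ) : ℕ) : ℝ)) / ((m*q : ℕ) : ℝ))
          = (m:ℝ) * ((m:ℝ)^(τ i + 1))⁻¹ * pB (τ i + 1) ((P * a i - ((u i : ℕ) : ℝ)) / (q : ℝ)) := by
        rw [Fin.sum_univ_eq_sum_range
          (fun k : ℕ => pB (τ i + 1) ((P * a i - (((u i : ℕ) + q * k : ℕ) : ℝ)) / ((m*q : ℕ) : ℝ)))]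
        rw [Finset.sum_congr rfl (fun k _ => ?_), pB_mul_sub (τ i + 1) m hm
          ((P * a i - ((u i : ℕ) : ℝ)) / (q : ℝ))]
        congr 1
        push_cast
        field_simp
        ring
      simp only [hh, if_neg hi1, if_pos hi]
      rw [← Finset.mul_sum, hsum]
      have hmm : (m:ℝ) * ((m:ℝ)^(τ i + 1))⁻¹ = ((m:ℝ)^(τ i))⁻¹ := by
        rw [pow_succ]
        field_simp
        try ring
      rw [hmm]
      ring
    have hprod1 : ∏ i ∈ I₁, (∑ tt : Fin m, h i tt)
        = (∏ i ∈ I₁, ((m:ℝ)^(τ i))⁻¹) *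
          ∏ i ∈ I₁, (-1 : ℝ) ^ (τ i + 1) / (Nat.factorial (τ i + 1) : ℝ) *
            pB (τ i + 1) ((P * b i - ((u i : ℕ) : ℝ)) / (q : ℝ)) := by
      rw [Finset.prod_congr rfl hI1, Finset.prod_mul_distrib]
    have hprod2 : ∏ i ∈ I₂, (∑ tt : Fin m, h i tt)
        = (∏ i ∈ I₂, ((m:ℝ)^(τ i))⁻¹) *
          ∏ i ∈ I₂, (-1 : ℝ) ^ (τ i) / (Nat.factorial (τ i + 1) : ℝ) *
            pB (τ i + 1) ((P * a i - ((u i : ℕ) : ℝ)) / (q : ℝ)) := by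
      rw [Finset.prod_congr rfl hI2, Finset.prod_mul_distrib]
    rw [hI3, Finset.prod_union hdisj, hprod1, hprod2]
    have hpow : (∏ i ∈ I₁, ((m:ℝ)^(τ i))⁻¹) * ∏ i ∈ I₂, ((m:ℝ)^(τ i))⁻¹
        = ((m:ℝ)^(∑ i, τ i))⁻¹ := by
      rw [← Finset.prod_union hdisj, Finset.prod_inv_distrib, Finset.prod_pow_eq_pow_sum]
      congr 2
      exact Finset.sum_subset (Finset.subset_univ _) (fun i _ hi => hτ i hi)
    rw [hM, ← hpow]
    ring
  -- main assembly
  rw [wSum, ← Equiv.sum_comp E, Fintype.sum_prod_type, Finset.sum_comm, wSum, Finset.mul_sum]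
  apply Finset.sum_congr rfl
  intro u _
  simp only [hEval, hdiv, heC]
  rw [← Finset.mul_sum, ← Complex.ofReal_sum, hws u, Complex.ofReal_mul, hMC]
  ring
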